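/- arXiv:2205.14398 — 3 statements merged into one kernel-verified Lean document; each statement's English description precedes it below -/
import Mathlib

section
/- Let d,m∈ℕ, c,κ∈[1,∞), p∈[2,∞), let φ∈C²(ℝ^d,[1,∞)), μ∈C(ℝ^d,ℝ^d), σ∈C(ℝ^d,ℝ^{d×m}) satisfy for all x,y∈ℝ^d and all z∈ℝ^d∖{0} that max{⟨(∇φ)(x),z⟩/(φ(x)^{(p−1)/p}‖z‖), ⟨z,(Hess φ(x))z⟩/(φ(x)^{(p−2)/p}‖z‖²), (c‖x‖+max{‖μ(0)‖,‖σ(0)‖_F})/φ(x)^{1/p}} ≤ c and max{‖μ(x)−μ(y)‖, ‖σ(x)−σ(y)‖_F} ≤ c‖x−y‖. Then for all x∈ℝ^d it holds that |⟨∇(φ(x)^κ), μ(x)⟩| + ½·Tr(σ(x)[σ(x)]^*·Hess(φ(x)^κ)) ≤ (κ/2)·((κ−1)c⁴+3c³)·φ(x)^κ. -/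
/-- A feed-forward (ReLU) deep neural network: `H ≥ 1` hidden layers,
layer dimensions `k 0, …, k (H+1)` (all positive), weight matrices `W` and
bias vectors `B`.  This is the set `𝐍` of the paper. -/
structure DNN where
  H : ℕ
  hH : 1 ≤ H
  k : ℕ → ℕ
  hk : ∀ i, i ≤ H + 1 → 1 ≤ k i
  W : (n : ℕ) → Matrix (Fin (k (n + 1))) (Fin (k n)) ℝ
  B : (n : ℕ) → Fin (k (n + 1)) → ℝ

namespace DNN

/-- The hidden states of the network: `hidden Φ x 0 = x` and
`hidden Φ x (n+1) = ReLU (W n (hidden Φ x n) + B n)`. -/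
noncomputable def hidden (Φ : DNN) (x : Fin (Φ.k 0) → ℝ) : (n : ℕ) → Fin (Φ.k n) → ℝ
  | 0 => x
  | n + 1 => fun i => max ((Φ.W n).mulVec (hidden Φ x n) i + Φ.B n i) 0

/-- The realization `ℛ(Φ)` of the network (no activation on the output layer). -/
noncomputable def realize (Φ : DNN) (x : Fin (Φ.k 0) → ℝ) : Fin (Φ.k (Φ.H + 1)) → ℝ :=
  fun i => (Φ.W Φ.H).mulVec (hidden Φ x Φ.H) i + Φ.B Φ.H i

/-- The architecture `𝒟(Φ) = (k 0, …, k (H+1))` of the network. -/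
def arch (Φ : DNN) : List ℕ := (List.range (Φ.H + 2)).map Φ.k

/-- The number of parameters `𝒫(Φ) = ∑ k (n+1) * (k n + 1)`. -/
def params (Φ : DNN) : ℕ := ∑ n ∈ Finset.range (Φ.H + 1), Φ.k (n + 1) * (Φ.k n + 1)

/-- The maximal layer dimension `⦀𝒟(Φ)⦀`. -/
def archMax (Φ : DNN) : ℕ := Φ.arch.foldr max 0

/-- `Φ` realizes the (vector-valued) function `f : ℝ^p → ℝ^q`. -/
def RealizesFn (Φ : DNN) {p q : ℕ} (f : (Fin p → ℝ) → Fin q → ℝ) : Prop :=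
  ∃ (h0 : Φ.k 0 = p) (h1 : Φ.k (Φ.H + 1) = q),
    ∀ (x : Fin p → ℝ) (j : Fin q),
      f x j = Φ.realize (fun i => x (Fin.cast h0 i)) (Fin.cast h1.symm j)

/-- `Φ` realizes the scalar function `f : ℝ^p → ℝ`. -/
def RealizesScalar (Φ : DNN) {p : ℕ} (f : (Fin p → ℝ) → ℝ) : Prop :=
  Φ.RealizesFn fun x (_ : Fin 1) => f x

end DNN

namespace DNNArch

/-- The maximal entry `⦀α⦀` of a tuple `α ∈ 𝐃`. -/
def tupleMax (α : List ℕ) : ℕ := α.foldr max 0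

/-- The composition `α ⊙ β = (β₀, …, β_{H₂}, β_{H₂+1} + α₀, α₁, …, α_{H₁+1})`. -/
def odot (α β : List ℕ) : List ℕ := β.dropLast ++ [β.getLastD 0 + α.headD 0] ++ α.tail

/-- The sum `α ⊞ β = (α₀, α₁+β₁, …, α_H+β_H, β_{H+1})` (for tuples of equal length). -/
def boxplus (α β : List ℕ) : List ℕ :=
  (List.range α.length).map fun i =>
    if i = 0 then α.getD i 0
    else if i = α.length - 1 then β.getD i 0
    else α.getD i 0 + β.getD i 0

/-- `iterOdot A n` is the `(n+1)`-fold `⊙`-composition `A ⊙ A ⊙ ⋯ ⊙ A`. -/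
def iterOdot (A : List ℕ) : ℕ → List ℕ
  | 0 => A
  | n + 1 => odot A (iterOdot A n)

/-- Iterated `⊞`-sum `k₁ ⊞ k₂ ⊞ ⋯ ⊞ k_M`. -/
def boxplusFold : List (List ℕ) → List ℕ
  | [] => []
  | a :: l => l.foldl boxplus a

/-- The tuple `𝔫ⁿ_d = (d, 2d, …, 2d, d) ∈ ℕⁿ` (with `n - 2` entries equal to `2d`). -/
def nTuple (d n : ℕ) : List ℕ := d :: (List.replicate (n - 2) (2 * d) ++ [d])

end DNNArch

/-- Frobenius norm of a real matrix. -/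
noncomputable def frobNorm {d m : ℕ} (A : Matrix (Fin d) (Fin m) ℝ) : ℝ :=
  Real.sqrt (∑ i, ∑ j, A i j ^ 2)

/-- `gridFloor τ K t = max({τ 0, …, τ K} ∩ ((-∞, t) ∪ {τ 0}))`: the largest grid
point `τ k`, `k ≤ K`, strictly below `t` (and `τ 0` if there is none). -/
noncomputable def gridFloor (τ : ℕ → ℝ) (K : ℕ) (t : ℝ) : ℝ :=
  sSup ({y | ∃ k ≤ K, τ k = y} ∩ Set.Iio t ∪ {τ 0})

lemma frobNorm_eq_norm {d m : ℕ} (A : Matrix (Fin d) (Fin m) ℝ) :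
    frobNorm A = ‖((WithLp.equiv 2 (Fin d × Fin m → ℝ)).symm fun q => A q.1 q.2 :
      EuclideanSpace ℝ (Fin d × Fin m))‖ := by
  rw [EuclideanSpace.norm_eq, frobNorm]
  congr 1
  rw [Fintype.sum_prod_type]
  simp [Real.norm_eq_abs, sq_abs]

lemma frobNorm_nonneg {d m : ℕ} (A : Matrix (Fin d) (Fin m) ℝ) : 0 ≤ frobNorm A :=
  Real.sqrt_nonneg _

lemma frobNorm_sq {d m : ℕ} (A : Matrix (Fin d) (Fin m) ℝ) :
    frobNorm A ^ 2 = ∑ i, ∑ j, A i j ^ 2 := by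
  rw [frobNorm, Real.sq_sqrt]
  positivity

lemma frobNorm_le_sub_add {d m : ℕ} (A B : Matrix (Fin d) (Fin m) ℝ) :
    frobNorm A ≤ frobNorm (A - B) + frobNorm B := by
  rw [frobNorm_eq_norm, frobNorm_eq_norm, frobNorm_eq_norm]
  have h : ((WithLp.equiv 2 (Fin d × Fin m → ℝ)).symm fun q => (A - B) q.1 q.2 :
      EuclideanSpace ℝ (Fin d × Fin m)) =
      ((WithLp.equiv 2 (Fin d × Fin m → ℝ)).symm fun q => A q.1 q.2) -
      ((WithLp.equiv 2 (Fin d × Fin m → ℝ)).symm fun q => B q.1 q.2) := by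
    ext q; simp [Matrix.sub_apply]
  rw [h]
  calc ‖((WithLp.equiv 2 (Fin d × Fin m → ℝ)).symm fun q => A q.1 q.2 :
      EuclideanSpace ℝ (Fin d × Fin m))‖
      = ‖(((WithLp.equiv 2 (Fin d × Fin m → ℝ)).symm fun q => A q.1 q.2 :
          EuclideanSpace ℝ (Fin d × Fin m)) -
        ((WithLp.equiv 2 (Fin d × Fin m → ℝ)).symm fun q => B q.1 q.2)) +
        ((WithLp.equiv 2 (Fin d × Fin m → ℝ)).symm fun q => B q.1 q.2)‖ := by
        rw [sub_add_cancel]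
    _ ≤ _ := norm_add_le _ _

set_option maxHeartbeats 1000000 in
/-- (Lemma 2.1 (i), Lyapunov estimate.) Under the stated
conditions on `φ ∈ C²(ℝ^d, [1,∞))`, `μ` and `σ`, for all `x ∈ ℝ^d` one has
`|⟨∇(φ^κ)(x), μ(x)⟩| + ½·Tr(σ(x)σ(x)^* Hess(φ^κ)(x))
  ≤ (κ/2)((κ−1)c⁴ + 3c³)·φ(x)^κ`. -/
theorem lyapunov_power_estimate (d m : ℕ) (hd : 1 ≤ d) (hm : 1 ≤ m)
    (c κ p : ℝ) (hc : 1 ≤ c) (hκ : 1 ≤ κ) (hp : 2 ≤ p)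
    (φ : EuclideanSpace ℝ (Fin d) → ℝ)
    (hφreg : ContDiff ℝ 2 φ) (hφ1 : ∀ x, 1 ≤ φ x)
    (μ : EuclideanSpace ℝ (Fin d) → EuclideanSpace ℝ (Fin d))
    (σ : EuclideanSpace ℝ (Fin d) → Matrix (Fin d) (Fin m) ℝ)
    (hμc : Continuous μ) (hσc : Continuous σ)
    (hgrad : ∀ (x z : EuclideanSpace ℝ (Fin d)), z ≠ 0 →
      (∑ i, gradient φ x i * z i) / (φ x ^ ((p - 1)/p) * ‖z‖) ≤ c)
    (hhess : ∀ (x z : EuclideanSpace ℝ (Fin d)), z ≠ 0 →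
      (∑ i, z i * (fderiv ℝ (gradient φ) x z) i) / (φ x ^ ((p - 2)/p) * ‖z‖^2) ≤ c)
    (hgrow : ∀ (x z : EuclideanSpace ℝ (Fin d)), z ≠ 0 →
      (c * ‖x‖ + max ‖μ 0‖ (frobNorm (σ 0))) / φ x ^ ((1:ℝ)/p) ≤ c)
    (hlipμ : ∀ x y, ‖μ x - μ y‖ ≤ c * ‖x - y‖)
    (hlipσ : ∀ x y, frobNorm (σ x - σ y) ≤ c * ‖x - y‖) :
    ∀ x : EuclideanSpace ℝ (Fin d),
      |∑ i, gradient (fun y => φ y ^ κ) x i * μ x i| +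
        (1/2) * (∑ i, ∑ j, (σ x * (σ x).transpose) i j *
          (fderiv ℝ (gradient fun y => φ y ^ κ) x (EuclideanSpace.single i 1)) j)
        ≤ (κ/2) * ((κ - 1) * c ^ 4 + 3 * c ^ 3) * φ x ^ κ := by
  intro x
  have hF0 : (0:ℝ) < φ x := lt_of_lt_of_le one_pos (hφ1 x)
  have hφne : ∀ y, φ y ≠ 0 := fun y => (lt_of_lt_of_le one_pos (hφ1 y)).ne'
  have hdφ : Differentiable ℝ φ := hφreg.differentiable (by norm_num)
  have hdg : Differentiable ℝ (gradient φ) := by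
    have h1 : ContDiff ℝ 1 (fderiv ℝ φ) := hφreg.fderiv_right (by norm_num)
    exact fun y => ((InnerProductSpace.toDual ℝ _).symm.differentiable.comp
      (h1.differentiable (by norm_num))).differentiableAt
  have hc0 : (0:ℝ) < c := lt_of_lt_of_le one_pos hc
  have hκ0 : (0:ℝ) < κ := lt_of_lt_of_le one_pos hκ
  have hp0 : p ≠ 0 := by positivity
  -- gradient of the power
  have hgradκ : ∀ y, gradient (fun y => φ y ^ κ) y = (κ * φ y ^ (κ - 1)) • gradient φ y := by
    intro y
    have h1 : fderiv ℝ (fun y => φ y ^ κ) y = (κ * φ y ^ (κ - 1)) • fderiv ℝ φ y :=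
      (((hdφ y).hasFDerivAt).rpow_const (Or.inl (hφne y))).fderiv
    simp only [gradient, h1, map_smul]
  -- fderiv as inner with gradient
  have hL : ∀ v : EuclideanSpace ℝ (Fin d), fderiv ℝ φ x v = ∑ i, gradient φ x i * v i := by
    intro v
    have h2 : fderiv ℝ φ x = InnerProductSpace.toDual ℝ _ (gradient φ x) := by
      simp [gradient, LinearIsometryEquiv.apply_symm_apply]
    rw [h2, InnerProductSpace.toDual_apply_apply, PiLp.inner_apply]
    simp [RCLike.inner_apply, conj_trivial, mul_comm]
  -- absolute gradient bound
  have hG : ∀ z : EuclideanSpace ℝ (Fin d),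
      |∑ i, gradient φ x i * z i| ≤ c * (φ x ^ ((p - 1)/p) * ‖z‖) := by
    intro z
    rcases eq_or_ne z 0 with rfl | hz
    · simp
    · have hden : 0 < φ x ^ ((p - 1)/p) * ‖z‖ :=
        mul_pos (Real.rpow_pos_of_pos hF0 _) (norm_pos_iff.mpr hz)
      rw [abs_le]
      constructor
      · have h1 := hgrad x (-z) (neg_ne_zero.mpr hz)
        rw [norm_neg] at h1
        have h2 := (div_le_iff₀ hden).mp h1
        simp only [PiLp.neg_apply, mul_neg, Finset.sum_neg_distrib] at h2
        linarith
      · exact (div_le_iff₀ hden).mp (hgrad x z hz)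
  -- hessian quadratic form bound
  have hH : ∀ z : EuclideanSpace ℝ (Fin d),
      (∑ i, z i * (fderiv ℝ (gradient φ) x z) i) ≤ c * (φ x ^ ((p - 2)/p) * ‖z‖^2) := by
    intro z
    rcases eq_or_ne z 0 with rfl | hz
    · simp
    · have hden : 0 < φ x ^ ((p - 2)/p) * ‖z‖^2 :=
        mul_pos (Real.rpow_pos_of_pos hF0 _) (pow_pos (norm_pos_iff.mpr hz) 2)
      exact (div_le_iff₀ hden).mp (hhess x z hz)
  -- growth bounds
  have hone : (EuclideanSpace.single (⟨0, hd⟩ : Fin d) (1:ℝ)) ≠ 0 := by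
    intro h
    have := congrArg (fun v : EuclideanSpace ℝ (Fin d) => v ⟨0, hd⟩) h
    simp [EuclideanSpace.single_apply] at this
  have hgrow' : c * ‖x‖ + max ‖μ 0‖ (frobNorm (σ 0)) ≤ c * φ x ^ ((1:ℝ)/p) := by
    have h1 := hgrow x _ hone
    rw [div_le_iff₀ (Real.rpow_pos_of_pos hF0 _)] at h1
    linarith [mul_comm c (φ x ^ ((1:ℝ)/p))]
  have hμx : ‖μ x‖ ≤ c * φ x ^ ((1:ℝ)/p) := by
    have h1 : ‖μ x‖ ≤ ‖μ x - μ 0‖ + ‖μ 0‖ := by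
      calc ‖μ x‖ = ‖(μ x - μ 0) + μ 0‖ := by rw [sub_add_cancel]
        _ ≤ _ := norm_add_le _ _
    have h2 := hlipμ x 0
    rw [sub_zero] at h2
    have h3 : ‖μ 0‖ ≤ max ‖μ 0‖ (frobNorm (σ 0)) := le_max_left _ _
    linarith
  have hσx : frobNorm (σ x) ≤ c * φ x ^ ((1:ℝ)/p) := by
    have h1 := frobNorm_le_sub_add (σ x) (σ 0)
    have h2 := hlipσ x 0
    rw [sub_zero] at h2
    have h3 : frobNorm (σ 0) ≤ max ‖μ 0‖ (frobNorm (σ 0)) := le_max_right _ _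
    linarith
  -- first term
  have hterm1 : |∑ i, gradient (fun y => φ y ^ κ) x i * μ x i| ≤ κ * c^2 * φ x ^ κ := by
    have he : ∑ i, gradient (fun y => φ y ^ κ) x i * μ x i
        = (κ * φ x ^ (κ - 1)) * ∑ i, gradient φ x i * μ x i := by
      rw [hgradκ x, Finset.mul_sum]
      refine Finset.sum_congr rfl fun i _ => ?_
      simp only [PiLp.smul_apply, smul_eq_mul]
      ring
    have ha : 0 < κ * φ x ^ (κ - 1) := mul_pos hκ0 (Real.rpow_pos_of_pos hF0 _)
    rw [he, abs_mul, abs_of_pos ha]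
    have h1 : |∑ i, gradient φ x i * μ x i|
        ≤ c * (φ x ^ ((p - 1)/p) * (c * φ x ^ ((1:ℝ)/p))) := by
      refine le_trans (hG (μ x)) ?_
      have h4 : (0:ℝ) < φ x ^ ((p - 1)/p) := Real.rpow_pos_of_pos hF0 _
      refine mul_le_mul_of_nonneg_left ?_ hc0.le
      exact mul_le_mul_of_nonneg_left hμx h4.le
    calc (κ * φ x ^ (κ - 1)) * |∑ i, gradient φ x i * μ x i|
        ≤ (κ * φ x ^ (κ - 1)) * (c * (φ x ^ ((p - 1)/p) * (c * φ x ^ ((1:ℝ)/p)))) :=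
          mul_le_mul_of_nonneg_left h1 ha.le
      _ = κ * c^2 * (φ x ^ (κ - 1) * (φ x ^ ((p - 1)/p) * φ x ^ ((1:ℝ)/p))) := by ring
      _ = κ * c^2 * φ x ^ κ := by
          rw [← Real.rpow_add hF0, ← Real.rpow_add hF0]
          congr 1
          field_simp
          congr 1
          rw [div_eq_iff hp0]
          ring
  -- second derivative formula
  have hfd2 : fderiv ℝ (gradient fun y => φ y ^ κ) x
      = (κ * φ x ^ (κ - 1)) • fderiv ℝ (gradient φ) x
        + ((κ * ((κ - 1) * φ x ^ (κ - 1 - 1))) • fderiv ℝ φ x).smulRight (gradient φ x) := by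
    have hsc : HasFDerivAt (fun y => κ * φ y ^ (κ - 1))
        ((κ * ((κ - 1) * φ x ^ (κ - 1 - 1))) • fderiv ℝ φ x) x := by
      have h1 := ((hdφ x).hasFDerivAt).rpow_const (p := κ - 1) (Or.inl (hφne x))
      have h2 := h1.const_mul κ
      simpa [smul_smul] using h2
    have hfun : (gradient fun y => φ y ^ κ) = fun y => (κ * φ y ^ (κ - 1)) • gradient φ y :=
      funext hgradκ
    rw [hfun]
    exact (hsc.smul (hdg x).hasFDerivAt).fderiv
  have hfd2' : ∀ (v : EuclideanSpace ℝ (Fin d)) (j : Fin d),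
      (fderiv ℝ (gradient fun y => φ y ^ κ) x v) j
      = (κ * φ x ^ (κ - 1)) * (fderiv ℝ (gradient φ) x v) j
        + (κ * ((κ - 1) * φ x ^ (κ - 1 - 1))) * (fderiv ℝ φ x v * gradient φ x j) := by
    intro v j
    rw [hfd2]
    simp only [ContinuousLinearMap.add_apply, ContinuousLinearMap.smul_apply,
      ContinuousLinearMap.smulRight_apply, PiLp.add_apply, PiLp.smul_apply, smul_eq_mul]
    ring
  have hLe : ∀ i : Fin d, fderiv ℝ φ x (EuclideanSpace.single i 1) = gradient φ x i := by
    intro i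
    rw [hL]
    simp [EuclideanSpace.single_apply]
  -- columns
  set col : Fin m → EuclideanSpace ℝ (Fin d) :=
    fun k => (WithLp.equiv 2 (Fin d → ℝ)).symm (fun i => σ x i k) with hcoldef
  have hcolapp : ∀ k i, col k i = σ x i k := fun k i => rfl
  have hcol : ∀ k, col k = ∑ i, σ x i k • EuclideanSpace.single i 1 := by
    intro k
    ext j
    rw [show ((∑ i, σ x i k • EuclideanSpace.single i 1 : EuclideanSpace ℝ (Fin d)) j)
        = ∑ i, (σ x i k • EuclideanSpace.single i 1 : EuclideanSpace ℝ (Fin d)) j from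
      by rw [WithLp.ofLp_sum, Finset.sum_apply]]
    simp [EuclideanSpace.single_apply, hcolapp]
  have hAcol : ∀ k j, (fderiv ℝ (gradient φ) x (col k)) j
      = ∑ i, σ x i k * (fderiv ℝ (gradient φ) x (EuclideanSpace.single i 1)) j := by
    intro k j
    rw [hcol k, map_sum]
    rw [show ((∑ i, fderiv ℝ (gradient φ) x (σ x i k • EuclideanSpace.single i 1)
        : EuclideanSpace ℝ (Fin d)) j)
        = ∑ i, (fderiv ℝ (gradient φ) x (σ x i k • EuclideanSpace.single i 1)) j from
      by rw [WithLp.ofLp_sum, Finset.sum_apply]]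
    refine Finset.sum_congr rfl fun i _ => ?_
    rw [map_smul]
    rfl
  have hcolnorm : ∀ k, ‖col k‖^2 = ∑ i, (σ x i k)^2 := by
    intro k
    rw [EuclideanSpace.norm_eq, Real.sq_sqrt (by positivity)]
    refine Finset.sum_congr rfl fun i _ => ?_
    rw [hcolapp k i, Real.norm_eq_abs, sq_abs]
  have hfrobsq : ∑ k, ‖col k‖^2 = frobNorm (σ x)^2 := by
    rw [frobNorm_sq, Finset.sum_comm]
    exact Finset.sum_congr rfl fun k _ => hcolnorm k
  -- split the trace
  have hT : (∑ i, ∑ j, (σ x * (σ x).transpose) i j *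
        (fderiv ℝ (gradient fun y => φ y ^ κ) x (EuclideanSpace.single i 1)) j)
      = (κ * φ x ^ (κ - 1)) * (∑ i, ∑ j, (σ x * (σ x).transpose) i j *
          (fderiv ℝ (gradient φ) x (EuclideanSpace.single i 1)) j)
        + (κ * ((κ - 1) * φ x ^ (κ - 1 - 1))) * (∑ i, ∑ j, (σ x * (σ x).transpose) i j *
          gradient φ x i * gradient φ x j) := by
    rw [Finset.mul_sum, Finset.mul_sum, ← Finset.sum_add_distrib]
    refine Finset.sum_congr rfl fun i _ => ?_
    rw [Finset.mul_sum, Finset.mul_sum, ← Finset.sum_add_distrib]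
    refine Finset.sum_congr rfl fun j _ => ?_
    rw [hfd2' (EuclideanSpace.single i 1) j, hLe i]
    ring
  -- the gradient-quadratic part
  have hV : (∑ i, ∑ j, (σ x * (σ x).transpose) i j * gradient φ x i * gradient φ x j)
      = ∑ k, (∑ i, gradient φ x i * σ x i k)^2 := by
    simp only [Matrix.mul_apply, Matrix.transpose_apply, Finset.sum_mul]
    rw [show (∑ i, ∑ j, ∑ k, σ x i k * σ x j k * gradient φ x i * gradient φ x j)
        = ∑ i, ∑ k, ∑ j, σ x i k * σ x j k * gradient φ x i * gradient φ x j from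
      Finset.sum_congr rfl fun i _ => Finset.sum_comm, Finset.sum_comm]
    refine Finset.sum_congr rfl fun k _ => ?_
    rw [sq, Finset.sum_mul_sum]
    exact Finset.sum_congr rfl fun i _ => Finset.sum_congr rfl fun j _ => by ring
  have hVle : (∑ i, ∑ j, (σ x * (σ x).transpose) i j * gradient φ x i * gradient φ x j)
      ≤ c^4 * φ x ^ (2:ℕ) := by
    rw [hV]
    have h1 : ∀ k : Fin m, (∑ i, gradient φ x i * σ x i k)^2
        ≤ (c * (φ x ^ ((p - 1)/p) * ‖col k‖))^2 := by
      intro k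
      have h := hG (col k)
      rw [show (∑ i, gradient φ x i * col k i) = ∑ i, gradient φ x i * σ x i k from rfl] at h
      calc (∑ i, gradient φ x i * σ x i k)^2
          = |∑ i, gradient φ x i * σ x i k|^2 := (sq_abs _).symm
        _ ≤ (c * (φ x ^ ((p - 1)/p) * ‖col k‖))^2 := by
            exact pow_le_pow_left₀ (abs_nonneg _) h 2
    calc ∑ k, (∑ i, gradient φ x i * σ x i k)^2
        ≤ ∑ k, (c * (φ x ^ ((p - 1)/p) * ‖col k‖))^2 := Finset.sum_le_sum fun k _ => h1 k
      _ = c^2 * (φ x ^ ((p - 1)/p))^2 * ∑ k, ‖col k‖^2 := by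
          rw [Finset.mul_sum]
          exact Finset.sum_congr rfl fun k _ => by ring
      _ = c^2 * (φ x ^ ((p - 1)/p))^2 * frobNorm (σ x)^2 := by rw [hfrobsq]
      _ ≤ c^2 * (φ x ^ ((p - 1)/p))^2 * (c * φ x ^ ((1:ℝ)/p))^2 := by
          refine mul_le_mul_of_nonneg_left ?_ (by positivity)
          exact pow_le_pow_left₀ (frobNorm_nonneg _) hσx 2
      _ = c^4 * (φ x ^ ((p - 1)/p) * φ x ^ ((1:ℝ)/p))^2 := by ring
      _ = c^4 * φ x ^ (2:ℕ) := by
          rw [← Real.rpow_add hF0]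
          congr 2
          · field_simp
            rw [show (p - 1 + 1) / p = 1 by rw [div_eq_one_iff_eq hp0]; ring, Real.rpow_one]
  -- the hessian part
  have hU : (∑ i, ∑ j, (σ x * (σ x).transpose) i j *
        (fderiv ℝ (gradient φ) x (EuclideanSpace.single i 1)) j)
      = ∑ k, ∑ j, col k j * (fderiv ℝ (gradient φ) x (col k)) j := by
    simp only [Matrix.mul_apply, Matrix.transpose_apply, Finset.sum_mul]
    rw [show (∑ i, ∑ j, ∑ k, σ x i k * σ x j k *
          (fderiv ℝ (gradient φ) x (EuclideanSpace.single i 1)) j)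
        = ∑ i, ∑ k, ∑ j, σ x i k * σ x j k *
          (fderiv ℝ (gradient φ) x (EuclideanSpace.single i 1)) j from
      Finset.sum_congr rfl fun i _ => Finset.sum_comm, Finset.sum_comm]
    refine Finset.sum_congr rfl fun k _ => ?_
    rw [Finset.sum_comm]
    refine Finset.sum_congr rfl fun j _ => ?_
    rw [hAcol k j, hcolapp k j, Finset.mul_sum]
    exact Finset.sum_congr rfl fun i _ => by ring
  have hUle : (∑ k, ∑ j, col k j * (fderiv ℝ (gradient φ) x (col k)) j)
      ≤ c^3 * φ x := by
    have h2 : ∑ k, ∑ j, col k j * (fderiv ℝ (gradient φ) x (col k)) j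
        ≤ ∑ k : Fin m, c * (φ x ^ ((p - 2)/p) * ‖col k‖^2) :=
      Finset.sum_le_sum fun k _ => hH (col k)
    have h3 : ∑ k : Fin m, c * (φ x ^ ((p - 2)/p) * ‖col k‖^2)
        = c * φ x ^ ((p - 2)/p) * frobNorm (σ x)^2 := by
      rw [← hfrobsq, Finset.mul_sum]
      exact Finset.sum_congr rfl fun k _ => by ring
    have h4 : frobNorm (σ x)^2 ≤ (c * φ x ^ ((1:ℝ)/p))^2 :=
      pow_le_pow_left₀ (frobNorm_nonneg _) hσx 2
    have hext : φ x ^ ((p - 2)/p) * φ x ^ ((1:ℝ)/p + (1:ℝ)/p) = φ x := by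
      rw [← Real.rpow_add hF0,
        show (p - 2)/p + ((1:ℝ)/p + (1:ℝ)/p) = 1 from by field_simp; ring, Real.rpow_one]
    have h5 : c * φ x ^ ((p - 2)/p) * (c * φ x ^ ((1:ℝ)/p))^2 = c^3 * φ x := by
      rw [mul_pow, pow_two (φ x ^ ((1:ℝ)/p)), ← Real.rpow_add hF0]
      linear_combination (c^3 : ℝ) * hext
    have h6 : 0 < c * φ x ^ ((p - 2)/p) := mul_pos hc0 (Real.rpow_pos_of_pos hF0 _)
    calc ∑ k, ∑ j, col k j * (fderiv ℝ (gradient φ) x (col k)) j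
        ≤ c * φ x ^ ((p - 2)/p) * frobNorm (σ x)^2 := by rw [← h3]; exact h2
      _ ≤ c * φ x ^ ((p - 2)/p) * (c * φ x ^ ((1:ℝ)/p))^2 :=
          mul_le_mul_of_nonneg_left h4 h6.le
      _ = c^3 * φ x := h5
  -- exponent bookkeeping
  have e1 : φ x ^ (κ - 1) * φ x = φ x ^ κ := by
    calc φ x ^ (κ - 1) * φ x = φ x ^ (κ - 1) * φ x ^ (1:ℝ) := by rw [Real.rpow_one]
      _ = φ x ^ (κ - 1 + 1) := (Real.rpow_add hF0 _ _).symm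
      _ = φ x ^ κ := by ring_nf
  have e2 : φ x ^ (κ - 1 - 1) * φ x ^ (2:ℕ) = φ x ^ κ := by
    rw [← Real.rpow_natCast (φ x) 2, ← Real.rpow_add hF0]
    norm_num
    congr 1
    ring
  -- put the trace bound together
  have ha1 : (0:ℝ) ≤ κ * φ x ^ (κ - 1) := by positivity
  have ha2 : (0:ℝ) ≤ κ * ((κ - 1) * φ x ^ (κ - 1 - 1)) := by
    have : (0:ℝ) ≤ κ - 1 := by linarith
    positivity
  have hTle : (∑ i, ∑ j, (σ x * (σ x).transpose) i j *
        (fderiv ℝ (gradient fun y => φ y ^ κ) x (EuclideanSpace.single i 1)) j)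
      ≤ κ * c^3 * φ x ^ κ + κ * (κ - 1) * c^4 * φ x ^ κ := by
    rw [hT, hU]
    have b1 : (κ * φ x ^ (κ - 1)) * (∑ k, ∑ j, col k j * (fderiv ℝ (gradient φ) x (col k)) j)
        ≤ (κ * φ x ^ (κ - 1)) * (c^3 * φ x) := mul_le_mul_of_nonneg_left hUle ha1
    have b2 : (κ * ((κ - 1) * φ x ^ (κ - 1 - 1))) * (∑ i, ∑ j, (σ x * (σ x).transpose) i j *
          gradient φ x i * gradient φ x j)
        ≤ (κ * ((κ - 1) * φ x ^ (κ - 1 - 1))) * (c^4 * φ x ^ (2:ℕ)) :=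
      mul_le_mul_of_nonneg_left hVle ha2
    have b3 : (κ * φ x ^ (κ - 1)) * (c^3 * φ x) = κ * c^3 * φ x ^ κ := by
      rw [show (κ * φ x ^ (κ - 1)) * (c^3 * φ x) = κ * c^3 * (φ x ^ (κ - 1) * φ x) from by ring,
        e1]
    have b4 : (κ * ((κ - 1) * φ x ^ (κ - 1 - 1))) * (c^4 * φ x ^ (2:ℕ))
        = κ * (κ - 1) * c^4 * φ x ^ κ := by
      rw [show (κ * ((κ - 1) * φ x ^ (κ - 1 - 1))) * (c^4 * φ x ^ (2:ℕ))
          = κ * (κ - 1) * c^4 * (φ x ^ (κ - 1 - 1) * φ x ^ (2:ℕ)) from by ring, e2]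
    linarith
  -- conclusion
  have hFκ : (0:ℝ) < φ x ^ κ := Real.rpow_pos_of_pos hF0 _
  have h23 : c^2 ≤ c^3 := pow_le_pow_right₀ hc (by norm_num)
  have hfin : κ * c^2 * φ x ^ κ
      + (1/2) * (κ * c^3 * φ x ^ κ + κ * (κ - 1) * c^4 * φ x ^ κ)
      ≤ (κ/2) * ((κ - 1) * c ^ 4 + 3 * c ^ 3) * φ x ^ κ := by
    nlinarith [mul_nonneg (mul_nonneg hκ0.le hFκ.le) (sub_nonneg.mpr h23)]
  linarith
end

section
/- Let d₁,d₂,d₃∈ℕ, f∈C(ℝ^{d₂},ℝ^{d₃}), g∈C(ℝ^{d₁},ℝ^{d₂}), and α,β∈𝐃 satisfy f∈ℛ({Φ∈𝐍 : 𝒟(Φ)=α}) and g∈ℛ({Φ∈𝐍 : 𝒟(Φ)=β}). Then the composition f∘g belongs to ℛ({Φ∈𝐍 : 𝒟(Φ)=α⊙β}). -/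
namespace DNNComp

def stackPN {a b : ℕ} (M : Matrix (Fin a) (Fin b) ℝ) : Matrix (Fin (a + a)) (Fin b) ℝ :=
  Matrix.of fun i j =>
    if h : (i : ℕ) < a then M ⟨i, h⟩ j
    else -(M ⟨(i : ℕ) - a, by have := i.isLt; omega⟩ j)

def stackPNv {a : ℕ} (v : Fin a → ℝ) : Fin (a + a) → ℝ := fun i =>
  if h : (i : ℕ) < a then v ⟨i, h⟩ else -(v ⟨(i : ℕ) - a, by have := i.isLt; omega⟩)

def splitPN {a b : ℕ} (M : Matrix (Fin a) (Fin b) ℝ) : Matrix (Fin a) (Fin (b + b)) ℝ :=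
  Matrix.of fun i j =>
    if h : (j : ℕ) < b then M i ⟨j, h⟩
    else -(M i ⟨(j : ℕ) - b, by have := j.isLt; omega⟩)

lemma relu_sub (t : ℝ) : max t 0 - max (-t) 0 = t := by
  rcases le_total t 0 with h | h
  · rw [max_eq_right h, max_eq_left (by linarith)]; ring
  · rw [max_eq_left h, max_eq_right (by linarith)]; ring

lemma stackPN_mulVec {a b : ℕ} (M : Matrix (Fin a) (Fin b) ℝ) (w : Fin b → ℝ)
    (j : Fin (a + a)) :
    (stackPN M).mulVec w j = stackPNv (M.mulVec w) j := by
  simp only [stackPN, stackPNv, Matrix.mulVec, dotProduct, Matrix.of_apply]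
  split
  · rfl
  · rw [← Finset.sum_neg_distrib]
    exact Finset.sum_congr rfl fun t _ => by ring

lemma splitPN_mulVec {a b : ℕ} (M : Matrix (Fin a) (Fin b) ℝ) (y : Fin b → ℝ)
    (v : Fin (b + b) → ℝ)
    (hv : ∀ j : Fin (b + b), v j =
      if h : (j : ℕ) < b then max (y ⟨j, h⟩) 0
      else max (-(y ⟨(j : ℕ) - b, by have := j.isLt; omega⟩)) 0)
    (i : Fin a) :
    (splitPN M).mulVec v i = M.mulVec y i := by
  simp only [Matrix.mulVec, dotProduct]
  rw [Fin.sum_univ_add]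
  have h1 : ∀ j : Fin b, splitPN M i (Fin.castAdd b j) * v (Fin.castAdd b j)
      = M i j * max (y j) 0 := by
    intro j
    rw [hv]
    simp only [splitPN, Matrix.of_apply, Fin.coe_castAdd, j.isLt, dif_pos]
  have h2 : ∀ j : Fin b, splitPN M i (Fin.natAdd b j) * v (Fin.natAdd b j)
      = -(M i j) * max (-(y j)) 0 := by
    intro j
    rw [hv]
    have hnb : ¬ ((Fin.natAdd b j : Fin (b + b)) : ℕ) < b := by simp
    rw [dif_neg hnb]
    simp only [splitPN, Matrix.of_apply, Fin.coe_natAdd]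
    rw [dif_neg (by omega : ¬ b + (j : ℕ) < b)]
    have hbj : (⟨b + (j : ℕ) - b, by omega⟩ : Fin b) = j := by
      apply Fin.ext; simp
    rw [hbj]
  rw [Finset.sum_congr rfl fun j _ => h1 j, Finset.sum_congr rfl fun j _ => h2 j,
    ← Finset.sum_add_distrib]
  refine Finset.sum_congr rfl fun j _ => ?_
  calc M i j * max (y j) 0 + -(M i j) * max (-(y j)) 0
      = M i j * (max (y j) 0 - max (-(y j)) 0) := by ring
    _ = M i j * y j := by rw [relu_sub]

def kc (F G : DNN) : ℕ → ℕ := fun n =>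
  if n ≤ G.H then G.k n
  else if n = G.H + 1 then G.k (G.H + 1) + F.k 0
  else F.k (n - (G.H + 1))

lemma kc_le (F G : DNN) {n : ℕ} (h : n ≤ G.H) : kc F G n = G.k n := if_pos h

lemma kc_mid (F G : DNN) : kc F G (G.H + 1) = G.k (G.H + 1) + F.k 0 := by
  rw [kc, if_neg (by omega), if_pos rfl]

lemma kc_gt (F G : DNN) {n : ℕ} (h : G.H + 2 ≤ n) : kc F G n = F.k (n - (G.H + 1)) := by
  rw [kc, if_neg (by omega), if_neg (by omega)]

noncomputable def Wc (F G : DNN) (hE : F.k 0 = G.k (G.H + 1)) (n : ℕ) :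
    Matrix (Fin (kc F G (n + 1))) (Fin (kc F G n)) ℝ :=
  if h1 : n < G.H then
    (G.W n).submatrix (Fin.cast (kc_le F G (by omega))) (Fin.cast (kc_le F G (by omega)))
  else if h2 : n = G.H then
    (stackPN (G.W G.H)).submatrix
      (Fin.cast (by rw [h2, kc_mid, hE]))
      (Fin.cast (by rw [h2]; exact kc_le F G le_rfl))
  else if h3 : n = G.H + 1 then
    (splitPN (F.W 0)).submatrix
      (Fin.cast (by rw [h3, kc_gt F G (by omega)]; congr 1; omega))
      (Fin.cast (by rw [h3, kc_mid, hE]))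
  else
    (F.W (n - (G.H + 1))).submatrix
      (Fin.cast (by rw [kc_gt F G (by omega)]; congr 1; omega))
      (Fin.cast (kc_gt F G (by omega)))

noncomputable def Bc (F G : DNN) (hE : F.k 0 = G.k (G.H + 1)) (n : ℕ) :
    Fin (kc F G (n + 1)) → ℝ :=
  if h1 : n < G.H then fun i => G.B n (Fin.cast (kc_le F G (by omega)) i)
  else if h2 : n = G.H then fun i => stackPNv (G.B G.H) (Fin.cast (by rw [h2, kc_mid, hE]) i)
  else if h3 : n = G.H + 1 then
    fun i => F.B 0 (Fin.cast (by rw [h3, kc_gt F G (by omega)]; congr 1; omega) i)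
  else fun i =>
    F.B (n - (G.H + 1)) (Fin.cast (by rw [kc_gt F G (by omega)]; congr 1; omega) i)

noncomputable def comp (F G : DNN) (hE : F.k 0 = G.k (G.H + 1)) : DNN where
  H := G.H + F.H + 1
  hH := by omega
  k := kc F G
  hk := by
    intro i hi
    rw [kc]
    split
    · exact G.hk i (by omega)
    · split
      · have := G.hk (G.H + 1) (by omega)
        omega
      · exact F.hk _ (by omega)
  W := Wc F G hE
  B := Bc F G hE

lemma matrix_apply_congr {a b : ℕ} (M : Matrix (Fin a) (Fin b) ℝ)
    (i i' : Fin a) (j j' : Fin b) (hi : (i : ℕ) = i') (hj : (j : ℕ) = j') :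
    M i j = M i' j' := by rw [Fin.ext hi, Fin.ext hj]

lemma fun_apply_congr {a : ℕ} (v : Fin a → ℝ) (i i' : Fin a) (hi : (i : ℕ) = i') :
    v i = v i' := by rw [Fin.ext hi]

lemma mulVec_valcongr {a b a' b' : ℕ} (ha : a = a') (hb : b = b')
    (M : Matrix (Fin a) (Fin b) ℝ) (M' : Matrix (Fin a') (Fin b') ℝ)
    (hM : ∀ (i : Fin a) (j : Fin b) (i' : Fin a') (j' : Fin b'),
      (i : ℕ) = i' → (j : ℕ) = j' → M i j = M' i' j')
    (v : Fin b → ℝ) (v' : Fin b' → ℝ)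
    (hv : ∀ (j : Fin b) (j' : Fin b'), (j : ℕ) = j' → v j = v' j')
    (i : Fin a) (i' : Fin a') (hi : (i : ℕ) = i') :
    M.mulVec v i = M'.mulVec v' i' := by
  subst ha; subst hb
  obtain rfl : i = i' := Fin.ext hi
  obtain rfl : M = M' := by ext p q; exact hM p q p q rfl rfl
  obtain rfl : v = v' := funext fun j => hv j j rfl
  rfl

lemma stackPNv_pos {a : ℕ} (v : Fin a → ℝ) (i : Fin (a + a)) (h : (i : ℕ) < a) :
    stackPNv v i = v ⟨i, h⟩ := dif_pos h

lemma stackPNv_neg {a : ℕ} (v : Fin a → ℝ) (i : Fin (a + a)) (h : ¬ (i : ℕ) < a) :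
    stackPNv v i = -(v ⟨(i : ℕ) - a, by have := i.isLt; omega⟩) := dif_neg h

lemma Wc_lt_apply (F G : DNN) (hE : F.k 0 = G.k (G.H + 1)) {n : ℕ} (h : n < G.H)
    (i : Fin (kc F G (n + 1))) (j : Fin (kc F G n))
    (i' : Fin (G.k (n + 1))) (j' : Fin (G.k n))
    (hi : (i : ℕ) = i') (hj : (j : ℕ) = j') :
    Wc F G hE n i j = G.W n i' j' := by
  rw [Wc, dif_pos h]
  exact matrix_apply_congr (G.W n) _ i' _ j' (by simpa using hi) (by simpa using hj)

lemma Wc_mid_apply (F G : DNN) (hE : F.k 0 = G.k (G.H + 1))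
    (i : Fin (kc F G (G.H + 1))) (j : Fin (kc F G G.H))
    (i' : Fin (G.k (G.H + 1) + G.k (G.H + 1))) (j' : Fin (G.k G.H))
    (hi : (i : ℕ) = i') (hj : (j : ℕ) = j') :
    Wc F G hE G.H i j = stackPN (G.W G.H) i' j' := by
  rw [Wc, dif_neg (lt_irrefl _), dif_pos rfl]
  exact matrix_apply_congr (stackPN (G.W G.H)) _ i' _ j' (by simpa using hi) (by simpa using hj)

lemma Wc_split_apply (F G : DNN) (hE : F.k 0 = G.k (G.H + 1))
    (i : Fin (kc F G (G.H + 1 + 1))) (j : Fin (kc F G (G.H + 1)))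
    (i' : Fin (F.k 1)) (j' : Fin (F.k 0 + F.k 0))
    (hi : (i : ℕ) = i') (hj : (j : ℕ) = j') :
    Wc F G hE (G.H + 1) i j = splitPN (F.W 0) i' j' := by
  rw [Wc, dif_neg (by omega), dif_neg (by omega), dif_pos rfl]
  exact matrix_apply_congr (splitPN (F.W 0)) _ i' _ j' (by simpa using hi) (by simpa using hj)

lemma Wc_high_apply (F G : DNN) (hE : F.k 0 = G.k (G.H + 1)) {n m : ℕ}
    (h : G.H + 2 ≤ n) (hm : n - (G.H + 1) = m)
    (i : Fin (kc F G (n + 1))) (j : Fin (kc F G n))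
    (i' : Fin (F.k (m + 1))) (j' : Fin (F.k m))
    (hi : (i : ℕ) = i') (hj : (j : ℕ) = j') :
    Wc F G hE n i j = F.W m i' j' := by
  subst hm
  rw [Wc, dif_neg (by omega), dif_neg (by omega), dif_neg (by omega)]
  exact matrix_apply_congr (F.W (n - (G.H + 1))) _ i' _ j' (by simpa using hi) (by simpa using hj)

lemma Bc_lt_apply (F G : DNN) (hE : F.k 0 = G.k (G.H + 1)) {n : ℕ} (h : n < G.H)
    (i : Fin (kc F G (n + 1))) (i' : Fin (G.k (n + 1))) (hi : (i : ℕ) = i') :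
    Bc F G hE n i = G.B n i' := by
  rw [Bc, dif_pos h]
  exact fun_apply_congr (G.B n) _ i' (by simpa using hi)

lemma Bc_mid_apply (F G : DNN) (hE : F.k 0 = G.k (G.H + 1))
    (i : Fin (kc F G (G.H + 1))) (i' : Fin (G.k (G.H + 1) + G.k (G.H + 1)))
    (hi : (i : ℕ) = i') :
    Bc F G hE G.H i = stackPNv (G.B G.H) i' := by
  rw [Bc, dif_neg (lt_irrefl _), dif_pos rfl]
  exact fun_apply_congr (stackPNv (G.B G.H)) _ i' (by simpa using hi)

lemma Bc_split_apply (F G : DNN) (hE : F.k 0 = G.k (G.H + 1))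
    (i : Fin (kc F G (G.H + 1 + 1))) (i' : Fin (F.k 1)) (hi : (i : ℕ) = i') :
    Bc F G hE (G.H + 1) i = F.B 0 i' := by
  rw [Bc, dif_neg (by omega), dif_neg (by omega), dif_pos rfl]
  exact fun_apply_congr (F.B 0) _ i' (by simpa using hi)

lemma Bc_high_apply (F G : DNN) (hE : F.k 0 = G.k (G.H + 1)) {n m : ℕ}
    (h : G.H + 2 ≤ n) (hm : n - (G.H + 1) = m)
    (i : Fin (kc F G (n + 1))) (i' : Fin (F.k (m + 1))) (hi : (i : ℕ) = i') :
    Bc F G hE n i = F.B m i' := by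
  subst hm
  rw [Bc, dif_neg (by omega), dif_neg (by omega), dif_neg (by omega)]
  exact fun_apply_congr (F.B (n - (G.H + 1))) _ i' (by simpa using hi)

lemma hidden_nat_congr (Φ : DNN) (x : Fin (Φ.k 0) → ℝ) {n n' : ℕ} (h : n = n')
    (i : Fin (Φ.k n)) (i' : Fin (Φ.k n')) (hi : (i : ℕ) = i') :
    Φ.hidden x n i = Φ.hidden x n' i' := by subst h; rw [Fin.ext hi]

lemma comp_hidden_low (F G : DNN) (hE : F.k 0 = G.k (G.H + 1))
    (x : Fin (kc F G 0) → ℝ) (x' : Fin (G.k 0) → ℝ)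
    (hx : ∀ (j : Fin (kc F G 0)) (j' : Fin (G.k 0)), (j : ℕ) = j' → x j = x' j') :
    ∀ n, n ≤ G.H → ∀ (i : Fin (kc F G n)) (i' : Fin (G.k n)), (i : ℕ) = i' →
      (comp F G hE).hidden x n i = G.hidden x' n i' := by
  intro n
  induction n with
  | zero => intro _ i i' hi; exact hx i i' hi
  | succ n ih =>
    intro hn i i' hi
    show max ((Wc F G hE n).mulVec ((comp F G hE).hidden x n) i + Bc F G hE n i) 0
        = max ((G.W n).mulVec (G.hidden x' n) i' + G.B n i') 0
    rw [mulVec_valcongr (kc_le F G hn) (kc_le F G (by omega)) (Wc F G hE n) (G.W n)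
        (fun p q p' q' hp hq => Wc_lt_apply F G hE (by omega) p q p' q' hp hq)
        ((comp F G hE).hidden x n) (G.hidden x' n)
        (fun p p' hp => ih (by omega) p p' hp) i i' hi,
      Bc_lt_apply F G hE (by omega) i i' hi]

lemma comp_hidden_mid (F G : DNN) (hE : F.k 0 = G.k (G.H + 1))
    (x : Fin (kc F G 0) → ℝ) (x' : Fin (G.k 0) → ℝ)
    (hx : ∀ (j : Fin (kc F G 0)) (j' : Fin (G.k 0)), (j : ℕ) = j' → x j = x' j')
    (i : Fin (kc F G (G.H + 1))) (i' : Fin (G.k (G.H + 1) + G.k (G.H + 1)))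
    (hi : (i : ℕ) = i') :
    (comp F G hE).hidden x (G.H + 1) i = max (stackPNv (G.realize x') i') 0 := by
  show max ((Wc F G hE G.H).mulVec ((comp F G hE).hidden x G.H) i + Bc F G hE G.H i) 0 = _
  have h1 : (Wc F G hE G.H).mulVec ((comp F G hE).hidden x G.H) i
      = (stackPN (G.W G.H)).mulVec (G.hidden x' G.H) i' :=
    mulVec_valcongr (by rw [kc_mid, hE]) (kc_le F G le_rfl) _ _
      (fun p q p' q' hp hq => Wc_mid_apply F G hE p q p' q' hp hq)
      _ _ (fun p p' hp => comp_hidden_low F G hE x x' hx G.H le_rfl p p' hp) i i' hi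
  rw [h1, stackPN_mulVec, Bc_mid_apply F G hE i i' hi]
  congr 1
  by_cases h : (i' : ℕ) < G.k (G.H + 1)
  · rw [stackPNv_pos _ _ h, stackPNv_pos _ _ h, stackPNv_pos _ _ h]
    rfl
  · rw [stackPNv_neg _ _ h, stackPNv_neg _ _ h, stackPNv_neg _ _ h, ← neg_add]
    rfl

lemma comp_hidden_high (F G : DNN) (hE : F.k 0 = G.k (G.H + 1))
    (x : Fin (kc F G 0) → ℝ) (x' : Fin (G.k 0) → ℝ)
    (hx : ∀ (j : Fin (kc F G 0)) (j' : Fin (G.k 0)), (j : ℕ) = j' → x j = x' j')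
    (z : Fin (F.k 0) → ℝ)
    (hz : ∀ (j : Fin (F.k 0)) (j' : Fin (G.k (G.H + 1))), (j : ℕ) = j' →
      z j = G.realize x' j') :
    ∀ m, 1 ≤ m → ∀ (i : Fin (kc F G (G.H + 1 + m))) (i' : Fin (F.k m)), (i : ℕ) = i' →
      (comp F G hE).hidden x (G.H + 1 + m) i = F.hidden z m i' := by
  intro m
  induction m with
  | zero => omega
  | succ m ih =>
    intro _ i i' hi
    rcases Nat.eq_zero_or_pos m with rfl | hm
    · -- base case: layer G.H + 2
      have e1 : kc F G (G.H + 1) = F.k 0 + F.k 0 := by rw [kc_mid, hE]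
      set v : Fin (F.k 0 + F.k 0) → ℝ :=
        fun j => (comp F G hE).hidden x (G.H + 1) (Fin.cast e1.symm j) with hv_def
      have hv : ∀ j : Fin (F.k 0 + F.k 0), v j =
          if h : (j : ℕ) < F.k 0 then max (z ⟨j, h⟩) 0
          else max (-(z ⟨(j : ℕ) - F.k 0, by have := j.isLt; omega⟩)) 0 := by
        intro j
        simp only [hv_def]
        refine (comp_hidden_mid F G hE x x' hx (Fin.cast e1.symm j)
          (Fin.cast (by rw [hE]) j) (by simp)).trans ?_
        by_cases h : (j : ℕ) < F.k 0
        · rw [dif_pos h, stackPNv_pos _ _ (by simpa using (hE ▸ h))]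
          congr 1
          exact (hz _ _ (by simp)).symm
        · rw [dif_neg h, stackPNv_neg _ _ (by simp only [Fin.coe_cast]; omega)]
          congr 2
          exact (hz _ _ (by simp only [Fin.coe_cast]; omega)).symm
      show max ((Wc F G hE (G.H + 1)).mulVec ((comp F G hE).hidden x (G.H + 1)) i
          + Bc F G hE (G.H + 1) i) 0
        = max ((F.W 0).mulVec z i' + F.B 0 i') 0
      have h1 : (Wc F G hE (G.H + 1)).mulVec ((comp F G hE).hidden x (G.H + 1)) i
          = (splitPN (F.W 0)).mulVec v i' :=
        mulVec_valcongr (by rw [kc_gt F G (by omega)]; congr 1; omega) e1 _ _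
          (fun p q p' q' hp hq => Wc_split_apply F G hE p q p' q' hp hq)
          _ _ (fun p p' hp => by
            simp only [hv_def]
            exact fun_apply_congr ((comp F G hE).hidden x (G.H + 1)) p _ (by exact hp))
          i i' hi
      rw [h1, splitPN_mulVec (F.W 0) z v hv i', Bc_split_apply F G hE i i' hi]
    · -- inductive step: layers beyond G.H + 2
      show max ((Wc F G hE (G.H + 1 + m)).mulVec ((comp F G hE).hidden x (G.H + 1 + m)) i
          + Bc F G hE (G.H + 1 + m) i) 0
        = max ((F.W m).mulVec (F.hidden z m) i' + F.B m i') 0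
      rw [mulVec_valcongr (by rw [kc_gt F G (by omega)]; congr 1; omega)
          (by rw [kc_gt F G (by omega)]; congr 1; omega)
          (Wc F G hE (G.H + 1 + m)) (F.W m)
          (fun p q p' q' hp hq =>
            Wc_high_apply F G hE (n := G.H + 1 + m) (m := m) (by omega) (by omega)
              p q p' q' hp hq)
          ((comp F G hE).hidden x (G.H + 1 + m)) (F.hidden z m)
          (fun p p' hp => ih hm p p' hp) i i' hi,
        Bc_high_apply F G hE (n := G.H + 1 + m) (m := m) (by omega) (by omega) i i' hi]

lemma comp_realize (F G : DNN) (hE : F.k 0 = G.k (G.H + 1))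
    (x : Fin (kc F G 0) → ℝ) (x' : Fin (G.k 0) → ℝ)
    (hx : ∀ (j : Fin (kc F G 0)) (j' : Fin (G.k 0)), (j : ℕ) = j' → x j = x' j')
    (z : Fin (F.k 0) → ℝ)
    (hz : ∀ (j : Fin (F.k 0)) (j' : Fin (G.k (G.H + 1))), (j : ℕ) = j' →
      z j = G.realize x' j')
    (i : Fin (kc F G (G.H + F.H + 1 + 1))) (i' : Fin (F.k (F.H + 1)))
    (hi : (i : ℕ) = i') :
    (comp F G hE).realize x i = F.realize z i' := by
  show (Wc F G hE (G.H + F.H + 1)).mulVec ((comp F G hE).hidden x (G.H + F.H + 1)) i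
      + Bc F G hE (G.H + F.H + 1) i
    = (F.W F.H).mulVec (F.hidden z F.H) i' + F.B F.H i'
  have hF1 := F.hH
  have hW : (Wc F G hE (G.H + F.H + 1)).mulVec
        ((comp F G hE).hidden x (G.H + F.H + 1)) i
      = (F.W F.H).mulVec (F.hidden z F.H) i' := by
    refine mulVec_valcongr (by rw [kc_gt F G (by omega)]; congr 1; omega)
      (by rw [kc_gt F G (by omega)]; congr 1; omega)
      (Wc F G hE (G.H + F.H + 1)) (F.W F.H)
      (fun p q p' q' hp hq =>
        Wc_high_apply F G hE (n := G.H + F.H + 1) (m := F.H) (by omega) (by omega)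
          p q p' q' hp hq)
      ((comp F G hE).hidden x (G.H + F.H + 1)) (F.hidden z F.H)
      (fun p p' hp => ?_) i i' hi
    have hcast : (comp F G hE).hidden x (G.H + F.H + 1) p
        = (comp F G hE).hidden x (G.H + 1 + F.H)
          (Fin.cast (congrArg (kc F G) (by omega)) p) :=
      hidden_nat_congr (comp F G hE) x (by omega) p _ rfl
    rw [hcast]
    exact comp_hidden_high F G hE x x' hx z hz F.H F.hH _ p' (by exact hp)
  rw [hW, Bc_high_apply F G hE (n := G.H + F.H + 1) (m := F.H) (by omega) (by omega) i i' hi]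

lemma comp_arch (F G : DNN) (hE : F.k 0 = G.k (G.H + 1)) :
    (comp F G hE).arch = DNNArch.odot F.arch G.arch := by
  have hG : G.arch = ((List.range (G.H + 1)).map G.k) ++ [G.k (G.H + 1)] := by
    show (List.range (G.H + 2)).map G.k = _
    rw [List.range_succ, List.map_append]
    rfl
  have hF : F.arch = F.k 0 :: (List.range (F.H + 1)).map (fun i => F.k (i + 1)) := by
    show (List.range (F.H + 2)).map F.k = _
    rw [List.range_succ_eq_map, List.map_cons, List.map_map]
    rfl
  rw [DNNArch.odot, hG, hF]
  simp only [List.dropLast_concat, List.getLastD_concat, List.headD_cons, List.tail_cons]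
  show (List.range (G.H + F.H + 3)).map (kc F G) = _
  rw [show G.H + F.H + 3 = (G.H + 2) + (F.H + 1) from by omega, List.range_add,
    List.map_append, List.range_succ, List.map_append]
  congr 1
  · congr 1
    · refine List.map_congr_left fun a ha => ?_
      exact kc_le F G (by have := List.mem_range.mp ha; omega)
    · simp [kc_mid]
  · rw [List.map_map]
    refine List.map_congr_left fun a ha => ?_
    show kc F G (G.H + 2 + a) = F.k (a + 1)
    rw [kc_gt F G (by omega)]
    congr 1
    omega

end DNNComp

/-- If `f : ℝ^{d₂} → ℝ^{d₃}` is realized by a network with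
architecture `α` and `g : ℝ^{d₁} → ℝ^{d₂}` by one with architecture `β`, then
`f ∘ g` is realized by a network with architecture `α ⊙ β`. -/
theorem dnn_composition (d₁ d₂ d₃ : ℕ) (hd₁ : 1 ≤ d₁) (hd₂ : 1 ≤ d₂) (hd₃ : 1 ≤ d₃)
    (f : (Fin d₂ → ℝ) → Fin d₃ → ℝ) (g : (Fin d₁ → ℝ) → Fin d₂ → ℝ)
    (hfc : Continuous f) (hgc : Continuous g)
    (α β : List ℕ)
    (hf : ∃ Φ : DNN, Φ.arch = α ∧ Φ.RealizesFn f)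
    (hg : ∃ Φ : DNN, Φ.arch = β ∧ Φ.RealizesFn g) :
    ∃ Φ : DNN, Φ.arch = DNNArch.odot α β ∧ Φ.RealizesFn fun x => f (g x) := by
  obtain ⟨F, haF, h0f, h1f, hrf⟩ := hf
  obtain ⟨Gn, haG, h0g, h1g, hrg⟩ := hg
  have hE : F.k 0 = Gn.k (Gn.H + 1) := h0f.trans h1g.symm
  refine ⟨DNNComp.comp F Gn hE, by rw [DNNComp.comp_arch, haF, haG], ?_⟩
  have h0 : (DNNComp.comp F Gn hE).k 0 = d₁ :=
    (DNNComp.kc_le F Gn (Nat.zero_le _)).trans h0g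
  have h1 : (DNNComp.comp F Gn hE).k ((DNNComp.comp F Gn hE).H + 1) = d₃ := by
    show DNNComp.kc F Gn (Gn.H + F.H + 1 + 1) = d₃
    rw [DNNComp.kc_gt F Gn (by omega),
      show Gn.H + F.H + 1 + 1 - (Gn.H + 1) = F.H + 1 from by omega]
    exact h1f
  refine ⟨h0, h1, fun x₀ j => ?_⟩
  show f (g x₀) j = _
  rw [hrf (g x₀) j]
  refine (DNNComp.comp_realize F Gn hE (fun i => x₀ (Fin.cast h0 i))
    (fun i => x₀ (Fin.cast h0g i))
    (fun p p' hp => congrArg x₀ (Fin.ext (by exact hp)))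
    (fun i => g x₀ (Fin.cast h0f i))
    (fun p p' hp => by
      show g x₀ (Fin.cast h0f p) = _
      rw [hrg x₀ (Fin.cast h0f p)]
      exact DNNComp.fun_apply_congr (Gn.realize fun i => x₀ (Fin.cast h0g i)) _ p'
        (by simp [hp]))
    (Fin.cast h1.symm j) (Fin.cast h1f.symm j) rfl).symm
end

section
/- Let M,H,p,q∈ℕ, h₁,…,h_M∈ℝ, let k₁,…,k_M∈𝐃 with dim(k_i)=H+2 for every i∈{1,…,M}, and let f₁,…,f_M∈C(ℝ^p,ℝ^q) satisfy f_i∈ℛ({Φ∈𝐍 : 𝒟(Φ)=k_i}) for every i∈{1,…,M}. Then the linear combination ∑_{i=1}^M h_i f_i belongs to ℛ({Φ∈𝐍 : 𝒟(Φ)=⊞_{i=1}^M k_i}). -/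
namespace DNNProof

open DNN

/-- Scale the last layer of a network by `c`. -/
noncomputable def scaleDNN (c : ℝ) (Φ : DNN) : DNN where
  H := Φ.H
  hH := Φ.hH
  k := Φ.k
  hk := Φ.hk
  W := fun n => if n = Φ.H then c • Φ.W n else Φ.W n
  B := fun n => if n = Φ.H then c • Φ.B n else Φ.B n

lemma scaleDNN_hidden (c : ℝ) (Φ : DNN) (x : Fin (Φ.k 0) → ℝ) :
    ∀ n, n ≤ Φ.H → (scaleDNN c Φ).hidden x n = Φ.hidden x n
  | 0, _ => rfl
  | n+1, h => by
      have ih := scaleDNN_hidden c Φ x n (by omega)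
      have hn : n ≠ Φ.H := by omega
      funext i
      show max (((scaleDNN c Φ).W n).mulVec ((scaleDNN c Φ).hidden x n) i
          + (scaleDNN c Φ).B n i) 0 = _
      rw [ih]
      simp only [scaleDNN, if_neg hn]
      rfl

lemma scaleDNN_realize (c : ℝ) (Φ : DNN) (x : Fin (Φ.k 0) → ℝ) (i) :
    (scaleDNN c Φ).realize x i = c * Φ.realize x i := by
  unfold DNN.realize
  have h := scaleDNN_hidden c Φ x Φ.H le_rfl
  show ((scaleDNN c Φ).W Φ.H).mulVec ((scaleDNN c Φ).hidden x Φ.H) i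
      + (scaleDNN c Φ).B Φ.H i = _
  rw [h]
  simp only [scaleDNN, if_true]
  show (c • Φ.W Φ.H).mulVec (Φ.hidden x Φ.H) i + (c • Φ.B Φ.H) i = _
  rw [Matrix.smul_mulVec]
  simp [mul_add]
  rfl

lemma scaleDNN_arch (c : ℝ) (Φ : DNN) : (scaleDNN c Φ).arch = Φ.arch := rfl

lemma scaleDNN_realizesFn (c : ℝ) (Φ : DNN) {p q : ℕ} (f : (Fin p → ℝ) → Fin q → ℝ)
    (hf : Φ.RealizesFn f) : (scaleDNN c Φ).RealizesFn (fun x j => c * f x j) := by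
  obtain ⟨h0, h1, hx⟩ := hf
  exact ⟨h0, h1, fun x j => by
    show c * f x j = _
    rw [hx x j]
    exact (scaleDNN_realize c Φ _ _).symm⟩

end DNNProof
namespace DNNProof

open DNN

/-- Layer sizes of the parallel combination. -/
def cK (H : ℕ) (k₁ k₂ : ℕ → ℕ) (n : ℕ) : ℕ :=
  if n = 0 then k₁ 0 else if n = H + 1 then k₂ n else k₁ n + k₂ n

lemma cK_zero (H : ℕ) (k₁ k₂ : ℕ → ℕ) : cK H k₁ k₂ 0 = k₁ 0 := rfl

lemma cK_mid (H : ℕ) (k₁ k₂ : ℕ → ℕ) {n : ℕ} (h1 : n ≠ 0) (h2 : n ≤ H) :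
    cK H k₁ k₂ n = k₁ n + k₂ n := by
  unfold cK; rw [if_neg h1, if_neg (by omega)]

lemma cK_top (H : ℕ) (k₁ k₂ : ℕ → ℕ) : cK H k₁ k₂ (H + 1) = k₂ (H + 1) := by
  unfold cK; rw [if_neg (by omega), if_pos rfl]

lemma sum_split {N a b : ℕ} (e : N = a + b) (F : Fin N → ℝ) :
    ∑ j, F j = (∑ j : Fin a, F ⟨j, by omega⟩) + ∑ j : Fin b, F ⟨a + j, by omega⟩ := by
  subst e
  exact Fin.sum_univ_add F

lemma sum_cast {N a : ℕ} (e : N = a) (F : Fin N → ℝ) :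
    ∑ j, F j = ∑ j : Fin a, F ⟨j, by omega⟩ := by
  subst e; rfl

section Combo

variable (H : ℕ) (hH : 1 ≤ H) (k₁ k₂ : ℕ → ℕ)
  (hk₁ : ∀ i, i ≤ H + 1 → 1 ≤ k₁ i) (hk₂ : ∀ i, i ≤ H + 1 → 1 ≤ k₂ i)
  (W₁ : (n : ℕ) → Matrix (Fin (k₁ (n + 1))) (Fin (k₁ n)) ℝ)
  (B₁ : (n : ℕ) → Fin (k₁ (n + 1)) → ℝ)
  (W₂ : (n : ℕ) → Matrix (Fin (k₂ (n + 1))) (Fin (k₂ n)) ℝ)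
  (B₂ : (n : ℕ) → Fin (k₂ (n + 1)) → ℝ)
  (e0 : k₂ 0 = k₁ 0) (eH : k₂ (H + 1) = k₁ (H + 1))

/-- The parallel combination network. -/
noncomputable def comboDNN : DNN where
  H := H
  hH := hH
  k := cK H k₁ k₂
  hk := fun i hi => by
    unfold cK
    split
    · exact hk₁ 0 (by omega)
    · split
      · exact hk₂ i hi
      · have := hk₁ i hi; omega
  W := fun n i j =>
    if hn0 : n = 0 then
      (if hi : (i : ℕ) < k₁ 1 then
        W₁ 0 ⟨i, hi⟩ ⟨(j : ℕ), by
            have h := j.2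
            have e : cK H k₁ k₂ n = k₁ 0 := by rw [hn0]; rfl
            omega⟩
      else
        W₂ 0 ⟨(i : ℕ) - k₁ 1, by
            have h := i.2
            have e : cK H k₁ k₂ (n + 1) = k₁ 1 + k₂ 1 := by
              rw [hn0]; exact cK_mid H k₁ k₂ one_ne_zero hH
            show (i : ℕ) - k₁ 1 < k₂ 1
            omega⟩
          ⟨(j : ℕ), by
            have h := j.2
            have e : cK H k₁ k₂ n = k₁ 0 := by rw [hn0]; rfl
            omega⟩)
    else if hn : n + 1 ≤ H then
      (if hi : (i : ℕ) < k₁ (n + 1) then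
        (if hj : (j : ℕ) < k₁ n then W₁ n ⟨i, hi⟩ ⟨j, hj⟩ else 0)
      else
        (if hj : (j : ℕ) < k₁ n then 0
        else W₂ n ⟨(i : ℕ) - k₁ (n + 1), by
              have h := i.2
              have e := cK_mid H k₁ k₂ (n := n + 1) (by omega) hn
              omega⟩
            ⟨(j : ℕ) - k₁ n, by
              have h := j.2
              have e := cK_mid H k₁ k₂ (n := n) hn0 (by omega)
              omega⟩))
    else if hnH : n = H then
      (if hj : (j : ℕ) < k₁ n then
        W₁ n ⟨(i : ℕ), by
            have h := i.2
            have e : cK H k₁ k₂ (n + 1) = k₂ (H + 1) := by rw [hnH]; exact cK_top H k₁ k₂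
            have e1 : k₁ (n + 1) = k₁ (H + 1) := by rw [hnH]
            omega⟩ ⟨j, hj⟩
      else
        W₂ n ⟨(i : ℕ), by
            have h := i.2
            have e : cK H k₁ k₂ (n + 1) = k₂ (H + 1) := by rw [hnH]; exact cK_top H k₁ k₂
            have e2 : k₂ (n + 1) = k₂ (H + 1) := by rw [hnH]
            omega⟩
          ⟨(j : ℕ) - k₁ n, by
            have h := j.2
            have e := cK_mid H k₁ k₂ (n := n) (by omega) (by omega)
            omega⟩)
    else 0
  B := fun n i =>
    if hn : n + 1 ≤ H then
      (if hi : (i : ℕ) < k₁ (n + 1) then B₁ n ⟨i, hi⟩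
      else B₂ n ⟨(i : ℕ) - k₁ (n + 1), by
          have h := i.2
          have e := cK_mid H k₁ k₂ (n := n + 1) (by omega) hn
          omega⟩)
    else if hnH : n = H then
      B₁ n ⟨(i : ℕ), by
          have h := i.2
          have e : cK H k₁ k₂ (n + 1) = k₂ (H + 1) := by rw [hnH]; exact cK_top H k₁ k₂
          have e1 : k₁ (n + 1) = k₁ (H + 1) := by rw [hnH]
          omega⟩
        + B₂ n ⟨(i : ℕ), by
          have h := i.2
          have e : cK H k₁ k₂ (n + 1) = k₂ (H + 1) := by rw [hnH]; exact cK_top H k₁ k₂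
          have e2 : k₂ (n + 1) = k₂ (H + 1) := by rw [hnH]
          omega⟩
    else 0

end Combo

end DNNProof
namespace DNNProof

open DNN

section ComboLemmas

variable (H : ℕ) (hH : 1 ≤ H) (k₁ k₂ : ℕ → ℕ)
  (hk₁ : ∀ i, i ≤ H + 1 → 1 ≤ k₁ i) (hk₂ : ∀ i, i ≤ H + 1 → 1 ≤ k₂ i)
  (W₁ : (n : ℕ) → Matrix (Fin (k₁ (n + 1))) (Fin (k₁ n)) ℝ)
  (B₁ : (n : ℕ) → Fin (k₁ (n + 1)) → ℝ)
  (W₂ : (n : ℕ) → Matrix (Fin (k₂ (n + 1))) (Fin (k₂ n)) ℝ)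
  (B₂ : (n : ℕ) → Fin (k₂ (n + 1)) → ℝ)
  (e0 : k₂ 0 = k₁ 0) (eH : k₂ (H + 1) = k₁ (H + 1))

lemma combo_hidden (x : Fin (k₁ 0) → ℝ) (x₂ : Fin (k₂ 0) → ℝ)
    (hx₂ : ∀ j : Fin (k₂ 0), x₂ j = x ⟨(j : ℕ), by rw [← e0]; exact j.2⟩) :
    ∀ n (hn1 : 1 ≤ n) (hn2 : n ≤ H) (i : Fin (cK H k₁ k₂ n)),
      (comboDNN H hH k₁ k₂ hk₁ hk₂ W₁ B₁ W₂ B₂ e0 eH).hidden x n i =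
        if h : (i : ℕ) < k₁ n then
          (DNN.mk H hH k₁ hk₁ W₁ B₁).hidden x n ⟨(i : ℕ), h⟩
        else
          (DNN.mk H hH k₂ hk₂ W₂ B₂).hidden x₂ n
            ⟨(i : ℕ) - k₁ n, by
              have hb := i.2
              have e := cK_mid H k₁ k₂ (n := n) (by omega) hn2
              show (i : ℕ) - k₁ n < k₂ n
              omega⟩ := by
  intro n
  induction n with
  | zero => omega
  | succ n ih =>
    intro hn1 hn2 i
    set Ψ := comboDNN H hH k₁ k₂ hk₁ hk₂ W₁ B₁ W₂ B₂ e0 eH with hΨ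
    show max ((Ψ.W n).mulVec (Ψ.hidden x n) i + Ψ.B n i) 0 = _
    rcases Nat.eq_zero_or_pos n with h0 | hpos
    · -- base case: n = 0
      subst h0
      by_cases hi : (i : ℕ) < k₁ 1
      · rw [dif_pos hi]
        show _ = max ((W₁ 0).mulVec x ⟨(i : ℕ), hi⟩ + B₁ 0 ⟨(i : ℕ), hi⟩) 0
        congr 1
        congr 1
        · -- mulVec parts
          show ∑ j, Ψ.W 0 i j * x j = ∑ j', W₁ 0 ⟨(i : ℕ), hi⟩ j' * x j'
          rw [sum_cast (show Ψ.k 0 = k₁ 0 from rfl) (fun j => Ψ.W 0 i j * x j)]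
          refine Finset.sum_congr rfl fun j' _ => ?_
          have hW : Ψ.W 0 i ⟨(j' : ℕ), by exact j'.2⟩ = W₁ 0 ⟨(i : ℕ), hi⟩ j' := by
            show dite _ _ _ = _
            rw [dif_pos hi]
          rw [hW]
          rfl
        · -- bias
          show Ψ.B 0 i = B₁ 0 ⟨(i : ℕ), hi⟩
          show dite _ _ _ = _
          rw [dif_pos hH, dif_pos hi]
      · rw [dif_neg hi]
        have e1 : cK H k₁ k₂ 1 = k₁ 1 + k₂ 1 := cK_mid H k₁ k₂ one_ne_zero hH
        have hb : (i : ℕ) < k₁ 1 + k₂ 1 := by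
          have h2 : (i : ℕ) < cK H k₁ k₂ 1 := i.2
          omega
        show _ = max ((W₂ 0).mulVec x₂ ⟨(i : ℕ) - k₁ 1, by show _ < k₂ 1; omega⟩
            + B₂ 0 ⟨(i : ℕ) - k₁ 1, by show _ < k₂ 1; omega⟩) 0
        congr 1
        congr 1
        · show ∑ j, Ψ.W 0 i j * x j = ∑ j', W₂ 0 _ j' * x₂ j'
          rw [sum_cast (show Ψ.k 0 = k₂ 0 from e0.symm) (fun j => Ψ.W 0 i j * x j)]
          refine Finset.sum_congr rfl fun j' _ => ?_
          have hW : Ψ.W 0 i ⟨(j' : ℕ), by show (j' : ℕ) < k₁ 0; omega⟩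
              = W₂ 0 ⟨(i : ℕ) - k₁ 1, by show _ < k₂ 1; omega⟩ j' := by
            show dite _ _ _ = _
            rw [dif_neg hi]
          rw [hW, hx₂ j']
          rfl
        · show Ψ.B 0 i = _
          show dite _ _ _ = _
          rw [dif_pos hH, dif_neg hi]
    · -- inductive step: 1 ≤ n
      have hn2' : n ≤ H := by omega
      have en : cK H k₁ k₂ n = k₁ n + k₂ n := cK_mid H k₁ k₂ (by omega) hn2'
      have en1 : cK H k₁ k₂ (n + 1) = k₁ (n + 1) + k₂ (n + 1) :=
        cK_mid H k₁ k₂ (by omega) hn2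
      have ekn : Ψ.k n = k₁ n + k₂ n := en
      have ekn1 : Ψ.k (n + 1) = k₁ (n + 1) + k₂ (n + 1) := en1
      have hsplit := sum_split (show Ψ.k n = k₁ n + k₂ n from en)
        (fun j => Ψ.W n i j * Ψ.hidden x n j)
      by_cases hi : (i : ℕ) < k₁ (n + 1)
      · rw [dif_pos hi]
        show _ = max ((W₁ n).mulVec ((DNN.mk H hH k₁ hk₁ W₁ B₁).hidden x n) ⟨(i : ℕ), hi⟩
            + B₁ n ⟨(i : ℕ), hi⟩) 0
        congr 1
        congr 1
        · show ∑ j, Ψ.W n i j * Ψ.hidden x n j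
              = ∑ j', W₁ n ⟨(i : ℕ), hi⟩ j' * (DNN.mk H hH k₁ hk₁ W₁ B₁).hidden x n j'
          rw [hsplit]
          have h2 : ∀ j₂ : Fin (k₂ n),
              Ψ.W n i ⟨k₁ n + (j₂ : ℕ), by omega⟩ * Ψ.hidden x n ⟨k₁ n + (j₂ : ℕ), by omega⟩ = 0 := by
            intro j₂
            have hW : Ψ.W n i ⟨k₁ n + (j₂ : ℕ), by omega⟩ = 0 := by
              show dite _ _ _ = _
              rw [dif_neg (by omega), dif_pos hn2, dif_pos hi,
                dif_neg (by show ¬(k₁ n + (j₂ : ℕ) < k₁ n); omega)]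
            rw [hW, zero_mul]
          rw [Finset.sum_congr rfl fun j₂ _ => h2 j₂, Finset.sum_const_zero, add_zero]
          refine Finset.sum_congr rfl fun j₁ _ => ?_
          have hW : Ψ.W n i ⟨(j₁ : ℕ), by omega⟩ = W₁ n ⟨(i : ℕ), hi⟩ j₁ := by
            show dite _ _ _ = _
            rw [dif_neg (by omega), dif_pos hn2, dif_pos hi, dif_pos j₁.2]
          have hh := ih (by omega) hn2' ⟨(j₁ : ℕ), by omega⟩
          rw [dif_pos (show ((⟨(j₁ : ℕ), by omega⟩ : Fin (cK H k₁ k₂ n)) : ℕ) < k₁ n from j₁.2)] at hh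
          rw [hW]
          exact congrArg (fun t => W₁ n ⟨(i : ℕ), hi⟩ j₁ * t) hh
        · show Ψ.B n i = B₁ n ⟨(i : ℕ), hi⟩
          show dite _ _ _ = _
          rw [dif_pos hn2, dif_pos hi]
      · rw [dif_neg hi]
        have hb := i.2
        show _ = max ((W₂ n).mulVec ((DNN.mk H hH k₂ hk₂ W₂ B₂).hidden x₂ n)
              ⟨(i : ℕ) - k₁ (n + 1), by omega⟩
            + B₂ n ⟨(i : ℕ) - k₁ (n + 1), by omega⟩) 0
        congr 1
        congr 1
        · show ∑ j, Ψ.W n i j * Ψ.hidden x n j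
              = ∑ j', W₂ n ⟨(i : ℕ) - k₁ (n + 1), by omega⟩ j'
                  * (DNN.mk H hH k₂ hk₂ W₂ B₂).hidden x₂ n j'
          rw [hsplit]
          have h1 : ∀ j₁ : Fin (k₁ n),
              Ψ.W n i ⟨(j₁ : ℕ), by omega⟩ * Ψ.hidden x n ⟨(j₁ : ℕ), by omega⟩ = 0 := by
            intro j₁
            have hW : Ψ.W n i ⟨(j₁ : ℕ), by omega⟩ = 0 := by
              show dite _ _ _ = _
              rw [dif_neg (by omega), dif_pos hn2, dif_neg hi,
                dif_pos (show ((⟨(j₁ : ℕ), by omega⟩ : Fin (Ψ.k n)) : ℕ) < k₁ n from j₁.2)]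
            rw [hW, zero_mul]
          rw [Finset.sum_congr rfl fun j₁ _ => h1 j₁, Finset.sum_const_zero, zero_add]
          refine Finset.sum_congr rfl fun j₂ _ => ?_
          have hW : Ψ.W n i ⟨k₁ n + (j₂ : ℕ), by omega⟩
              = W₂ n ⟨(i : ℕ) - k₁ (n + 1), by omega⟩ j₂ := by
            show dite _ _ _ = _
            rw [dif_neg (by omega), dif_pos hn2, dif_neg hi,
              dif_neg (by show ¬(k₁ n + (j₂ : ℕ) < k₁ n); omega)]
            congr 1
            exact Fin.ext (by show k₁ n + (j₂ : ℕ) - k₁ n = (j₂ : ℕ); omega)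
          have hh := ih (by omega) hn2' ⟨k₁ n + (j₂ : ℕ), by omega⟩
          rw [dif_neg (show ¬((⟨k₁ n + (j₂ : ℕ), by omega⟩ : Fin (cK H k₁ k₂ n)) : ℕ) < k₁ n by
            simp)] at hh
          rw [hW, show Ψ.hidden x n ⟨k₁ n + (j₂ : ℕ), by omega⟩ = _ from hh]
          congr 1
          exact congrArg _ (Fin.ext (by show k₁ n + (j₂ : ℕ) - k₁ n = (j₂ : ℕ); omega))
        · show Ψ.B n i = _
          show dite _ _ _ = _
          rw [dif_pos hn2, dif_neg hi]

end ComboLemmas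

end DNNProof
namespace DNNProof

open DNN

section ComboLemmas2

variable (H : ℕ) (hH : 1 ≤ H) (k₁ k₂ : ℕ → ℕ)
  (hk₁ : ∀ i, i ≤ H + 1 → 1 ≤ k₁ i) (hk₂ : ∀ i, i ≤ H + 1 → 1 ≤ k₂ i)
  (W₁ : (n : ℕ) → Matrix (Fin (k₁ (n + 1))) (Fin (k₁ n)) ℝ)
  (B₁ : (n : ℕ) → Fin (k₁ (n + 1)) → ℝ)
  (W₂ : (n : ℕ) → Matrix (Fin (k₂ (n + 1))) (Fin (k₂ n)) ℝ)
  (B₂ : (n : ℕ) → Fin (k₂ (n + 1)) → ℝ)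
  (e0 : k₂ 0 = k₁ 0) (eH : k₂ (H + 1) = k₁ (H + 1))

lemma combo_realize (x : Fin (k₁ 0) → ℝ) (x₂ : Fin (k₂ 0) → ℝ)
    (hx₂ : ∀ j : Fin (k₂ 0), x₂ j = x ⟨(j : ℕ), by rw [← e0]; exact j.2⟩)
    (i : Fin (cK H k₁ k₂ (H + 1))) (b1 : (i : ℕ) < k₁ (H + 1))
    (b2 : (i : ℕ) < k₂ (H + 1)) :
    (comboDNN H hH k₁ k₂ hk₁ hk₂ W₁ B₁ W₂ B₂ e0 eH).realize x i
      = (DNN.mk H hH k₁ hk₁ W₁ B₁).realize x ⟨(i : ℕ), b1⟩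
        + (DNN.mk H hH k₂ hk₂ W₂ B₂).realize x₂ ⟨(i : ℕ), b2⟩ := by
  set Ψ := comboDNN H hH k₁ k₂ hk₁ hk₂ W₁ B₁ W₂ B₂ e0 eH with hΨ
  have hne : H ≠ 0 := by omega
  have en' : cK H k₁ k₂ H = k₁ H + k₂ H := cK_mid H k₁ k₂ hne le_rfl
  have en : Ψ.k H = k₁ H + k₂ H := en'
  show (∑ j, Ψ.W H i j * Ψ.hidden x H j) + Ψ.B H i
      = ((∑ j₁, W₁ H ⟨(i : ℕ), b1⟩ j₁ * (DNN.mk H hH k₁ hk₁ W₁ B₁).hidden x H j₁)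
          + B₁ H ⟨(i : ℕ), b1⟩)
        + ((∑ j₂, W₂ H ⟨(i : ℕ), b2⟩ j₂ * (DNN.mk H hH k₂ hk₂ W₂ B₂).hidden x₂ H j₂)
          + B₂ H ⟨(i : ℕ), b2⟩)
  rw [sum_split (show Ψ.k H = k₁ H + k₂ H from en) (fun j => Ψ.W H i j * Ψ.hidden x H j)]
  have hB : Ψ.B H i = B₁ H ⟨(i : ℕ), b1⟩ + B₂ H ⟨(i : ℕ), b2⟩ := by
    show dite _ _ _ = _
    rw [dif_neg (by omega), dif_pos rfl]
  rw [hB]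
  have h1 : ∀ j₁ : Fin (k₁ H),
      Ψ.W H i ⟨(j₁ : ℕ), by have := j₁.2; omega⟩
          * Ψ.hidden x H ⟨(j₁ : ℕ), by have := j₁.2; omega⟩
        = W₁ H ⟨(i : ℕ), b1⟩ j₁ * (DNN.mk H hH k₁ hk₁ W₁ B₁).hidden x H j₁ := by
    intro j₁
    have hW : Ψ.W H i ⟨(j₁ : ℕ), by have := j₁.2; omega⟩ = W₁ H ⟨(i : ℕ), b1⟩ j₁ := by
      show dite _ _ _ = _
      rw [dif_neg hne, dif_neg (by omega), dif_pos rfl,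
        dif_pos (show ((⟨(j₁ : ℕ), by have := j₁.2; omega⟩ : Fin (Ψ.k H)) : ℕ) < k₁ H
          from j₁.2)]
    have hh := combo_hidden H hH k₁ k₂ hk₁ hk₂ W₁ B₁ W₂ B₂ e0 eH x x₂ hx₂ H hH le_rfl
      ⟨(j₁ : ℕ), by have := j₁.2; omega⟩
    rw [dif_pos (show ((⟨(j₁ : ℕ), by have := j₁.2; omega⟩ : Fin (cK H k₁ k₂ H)) : ℕ) < k₁ H
      from j₁.2)] at hh
    rw [hW]
    exact congrArg (fun t => W₁ H ⟨(i : ℕ), b1⟩ j₁ * t) hh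
  have h2 : ∀ j₂ : Fin (k₂ H),
      Ψ.W H i ⟨k₁ H + (j₂ : ℕ), by have := j₂.2; omega⟩
          * Ψ.hidden x H ⟨k₁ H + (j₂ : ℕ), by have := j₂.2; omega⟩
        = W₂ H ⟨(i : ℕ), b2⟩ j₂ * (DNN.mk H hH k₂ hk₂ W₂ B₂).hidden x₂ H j₂ := by
    intro j₂
    have hW : Ψ.W H i ⟨k₁ H + (j₂ : ℕ), by have := j₂.2; omega⟩ = W₂ H ⟨(i : ℕ), b2⟩ j₂ := by
      show dite _ _ _ = _
      rw [dif_neg hne, dif_neg (by omega), dif_pos rfl,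
        dif_neg (by show ¬(k₁ H + (j₂ : ℕ) < k₁ H); omega)]
      congr 1
      exact Fin.ext (by show k₁ H + (j₂ : ℕ) - k₁ H = (j₂ : ℕ); omega)
    have hh := combo_hidden H hH k₁ k₂ hk₁ hk₂ W₁ B₁ W₂ B₂ e0 eH x x₂ hx₂ H hH le_rfl
      ⟨k₁ H + (j₂ : ℕ), by have := j₂.2; omega⟩
    rw [dif_neg (show ¬((⟨k₁ H + (j₂ : ℕ), by have := j₂.2; omega⟩
        : Fin (cK H k₁ k₂ H)) : ℕ) < k₁ H by simp)] at hh
    rw [hW, show Ψ.hidden x H ⟨k₁ H + (j₂ : ℕ), by have := j₂.2; omega⟩ = _ from hh]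
    congr 1
    exact congrArg _ (Fin.ext (by show k₁ H + (j₂ : ℕ) - k₁ H = (j₂ : ℕ); omega))
  rw [Finset.sum_congr rfl fun j₁ _ => h1 j₁, Finset.sum_congr rfl fun j₂ _ => h2 j₂]
  ring

lemma combo_arch :
    (comboDNN H hH k₁ k₂ hk₁ hk₂ W₁ B₁ W₂ B₂ e0 eH).arch
      = DNNArch.boxplus (DNN.mk H hH k₁ hk₁ W₁ B₁).arch
          (DNN.mk H hH k₂ hk₂ W₂ B₂).arch := by
  unfold DNN.arch DNNArch.boxplus
  simp only [List.length_map, List.length_range]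
  refine List.map_congr_left fun a ha => ?_
  rw [List.mem_range] at ha
  have ha' : a < H + 2 := ha
  have hg1 : ((List.range (H + 2)).map k₁).getD a 0 = k₁ a := by
    simp [List.getD_eq_getElem?_getD, List.getElem?_map, List.getElem?_range, ha']
  have hg2 : ((List.range (H + 2)).map k₂).getD a 0 = k₂ a := by
    simp [List.getD_eq_getElem?_getD, List.getElem?_map, List.getElem?_range, ha']
  show cK H k₁ k₂ a = _
  unfold cK
  by_cases h0 : a = 0
  · subst h0
    rw [if_pos rfl, if_pos rfl, hg1]
  · rw [if_neg h0, if_neg h0]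
    by_cases hT : a = H + 1
    · subst hT
      rw [if_pos rfl, if_pos (by omega), hg2]
    · rw [if_neg hT, if_neg (by omega), hg1, hg2]

end ComboLemmas2

lemma realizes_add {p q : ℕ} {f g : (Fin p → ℝ) → Fin q → ℝ} (Φ₁ Φ₂ : DNN)
    (hHe : Φ₂.H = Φ₁.H) (h1 : Φ₁.RealizesFn f) (h2 : Φ₂.RealizesFn g) :
    ∃ Ψ : DNN, Ψ.H = Φ₁.H ∧ Ψ.arch = DNNArch.boxplus Φ₁.arch Φ₂.arch ∧
      Ψ.RealizesFn (fun x j => f x j + g x j) := by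
  obtain ⟨H1, hH1, K1, hK1, WW1, BB1⟩ := Φ₁
  obtain ⟨H2, hH2, K2, hK2, WW2, BB2⟩ := Φ₂
  simp only at hHe h1 h2 ⊢
  have hHe' : H1 = H2 := hHe.symm
  subst hHe'
  obtain ⟨a0, a1, hfx⟩ := h1
  obtain ⟨b0, b1, hgx⟩ := h2
  simp only at a0 a1 b0 b1 hfx hgx
  have e0 : K2 0 = K1 0 := by rw [a0, b0]
  have eH : K2 (H1 + 1) = K1 (H1 + 1) := by rw [a1, b1]
  refine ⟨comboDNN H1 hH1 K1 K2 hK1 hK2 WW1 BB1 WW2 BB2 e0 eH, rfl,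
    combo_arch H1 hH1 K1 K2 hK1 hK2 WW1 BB1 WW2 BB2 e0 eH, ?_⟩
  refine ⟨a0, by show cK H1 K1 K2 (H1 + 1) = q; rw [cK_top]; exact b1, ?_⟩
  intro x j
  show f x j + g x j = _
  rw [hfx x j, hgx x j]
  have hr := combo_realize H1 hH1 K1 K2 hK1 hK2 WW1 BB1 WW2 BB2 e0 eH
    (fun i => x (Fin.cast a0 i)) (fun i => x (Fin.cast b0 i)) (fun j' => rfl)
    ⟨(j : ℕ), by rw [cK_top, b1]; exact j.2⟩
    (by show (j : ℕ) < K1 (H1 + 1); rw [a1]; exact j.2)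
    (by show (j : ℕ) < K2 (H1 + 1); rw [b1]; exact j.2)
  exact hr.symm

end DNNProof
namespace DNNProof

open DNN

lemma arch_length (Φ : DNN) : Φ.arch.length = Φ.H + 2 := by
  simp [DNN.arch]

lemma boxplusFold_concat (a : List ℕ) (l : List (List ℕ)) (hl : l ≠ []) :
    DNNArch.boxplusFold (l.concat a) = DNNArch.boxplus (DNNArch.boxplusFold l) a := by
  rcases l with _ | ⟨b, t⟩
  · exact absurd rfl hl
  · show DNNArch.boxplusFold (b :: t.concat a) = _
    show (t.concat a).foldl DNNArch.boxplus b = _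
    rw [List.concat_eq_append, List.foldl_append]
    rfl

lemma realizes_sum (p q : ℕ) :
    ∀ (M : ℕ), 1 ≤ M → ∀ (H : ℕ), 1 ≤ H → ∀ (ks : Fin M → List ℕ),
      (∀ i, (ks i).length = H + 2) →
      ∀ (gs : Fin M → (Fin p → ℝ) → Fin q → ℝ),
      (∀ i, ∃ Φ : DNN, Φ.arch = ks i ∧ Φ.RealizesFn (gs i)) →
      ∃ Φ : DNN, Φ.H = H ∧ Φ.arch = DNNArch.boxplusFold (List.ofFn ks) ∧
        Φ.RealizesFn (fun x j => ∑ i, gs i x j) := by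
  intro M
  induction M with
  | zero => omega
  | succ M ihM =>
    intro _ H hHp ks hlen gs hrep
    rcases Nat.eq_zero_or_pos M with hM0 | hMpos
    · -- M + 1 = 1
      subst hM0
      obtain ⟨Φ, hΦa, hΦr⟩ := hrep 0
      have hΦH : Φ.H = H := by
        have := arch_length Φ
        rw [hΦa, hlen 0] at this
        omega
      refine ⟨Φ, hΦH, ?_, ?_⟩
      · rw [show List.ofFn ks = [ks 0] by simp [List.ofFn_succ]]
        exact hΦa
      · obtain ⟨h0, h1, hx⟩ := hΦr
        exact ⟨h0, h1, fun x j => by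
          show (∑ i, gs i x j) = _
          rw [show (∑ i, gs i x j) = gs 0 x j from by simp [Fin.sum_univ_succ]]
          exact hx x j⟩
    · -- M ≥ 1
      obtain ⟨Ψ, hΨH, hΨa, hΨr⟩ := ihM hMpos H hHp (fun i => ks i.castSucc)
        (fun i => hlen i.castSucc) (fun i x j => gs i.castSucc x j)
        (fun i => hrep i.castSucc)
      obtain ⟨Φl, hΦla, hΦlr⟩ := hrep (Fin.last M)
      have hΦlH : Φl.H = H := by
        have := arch_length Φl
        rw [hΦla, hlen (Fin.last M)] at this
        omega
      obtain ⟨Θ, hΘH, hΘa, hΘr⟩ := realizes_add Ψ Φl (by rw [hΦlH, hΨH]) hΨr hΦlr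
      refine ⟨Θ, by rw [hΘH, hΨH], ?_, ?_⟩
      · rw [List.ofFn_succ' ks,
          boxplusFold_concat (ks (Fin.last M)) (List.ofFn fun i => ks i.castSucc)
            (by
              have : (List.ofFn fun i : Fin M => ks i.castSucc).length = M := by simp
              intro hnil
              rw [hnil] at this
              simp at this
              omega),
          hΘa, hΨa, hΦla]
      · obtain ⟨h0, h1, hx⟩ := hΘr
        exact ⟨h0, h1, fun x j => by
          show (∑ i, gs i x j) = _
          rw [Fin.sum_univ_castSucc]
          exact hx x j⟩

end DNNProof

/-- If `f₁, …, f_M : ℝ^p → ℝ^q` are realized by networks with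
architectures `k₁, …, k_M`, all of length `H+2`, then for any `h₁, …, h_M ∈ ℝ`
the linear combination `∑ i, h i • f i` is realized by a network with
architecture `k₁ ⊞ k₂ ⊞ ⋯ ⊞ k_M`. -/
theorem dnn_linear_combination (M H p q : ℕ) (hM : 1 ≤ M) (hH : 1 ≤ H)
    (hp : 1 ≤ p) (hq : 1 ≤ q)
    (h : Fin M → ℝ) (ks : Fin M → List ℕ)
    (hlen : ∀ i, (ks i).length = H + 2)
    (fs : Fin M → (Fin p → ℝ) → Fin q → ℝ)
    (hfc : ∀ i, Continuous (fs i))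
    (hrep : ∀ i, ∃ Φ : DNN, Φ.arch = ks i ∧ Φ.RealizesFn (fs i)) :
    ∃ Φ : DNN, Φ.arch = DNNArch.boxplusFold (List.ofFn ks) ∧
      Φ.RealizesFn fun x j => ∑ i, h i * fs i x j := by
  obtain ⟨Φ, -, ha, hr⟩ := DNNProof.realizes_sum p q M hM H hH ks hlen
    (fun i x j => h i * fs i x j)
    (fun i => by
      obtain ⟨Φ, hΦa, hΦr⟩ := hrep i
      exact ⟨DNNProof.scaleDNN (h i) Φ, by rw [DNNProof.scaleDNN_arch]; exact hΦa,
        DNNProof.scaleDNN_realizesFn (h i) Φ (fs i) hΦr⟩)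
  exact ⟨Φ, ha, hr⟩
end
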